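/- Negative dependence of two interacting partial exclusion particles: for every t ≥ 0, every f : V → ℝ, and every (x,y) ∈ V×V, (exp(tA^{(2)})(f⊗f))(x,y) ≤ (exp(tA)f)(x) · (exp(tA)f)(y), where exp(tA^{(2)}) and exp(tA) denote the matrix exponentials of A^{(2)} (viewed as a matrix indexed by V×V) and of A (viewed as a matrix indexed by V). -/

import Mathlib

open scoped BigOperators

/-- Configuration space: at most `α x` particles at each site `x`. -/
abbrev Conf {V : Type*} (α : V → ℕ) : Type _ := ∀ x : V, Fin (α x + 1)

/-- The configuration `η` with one particle moved from `x` to `y`. -/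
def move {V : Type*} [DecidableEq V] (α : V → ℕ) (η : Conf α) (x y : V) : Conf α :=
  Function.update
    (Function.update η x ⟨(η x : ℕ) - 1, by have := (η x).isLt; omega⟩)
    y ⟨min ((η y : ℕ) + 1) (α y), by
      have := Nat.min_le_right ((η y : ℕ) + 1) (α y); omega⟩

/-- Jump rate of the partial exclusion process of interacting BTM(a):
rate for moving a particle from `x` to `y`.  It vanishes if `η x = 0` or
`η y = α y`, so `move` is only effectively used where it is well defined. -/
noncomputable def jumpRate {V : Type*} (α : V → ℕ) (a : ℝ) (η : Conf α) (x y : V) : ℝ :=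
  ((η x : ℕ) : ℝ) * (α x : ℝ) ^ (a - 1) * (α y : ℝ) ^ a *
    (1 - ((η y : ℕ) : ℝ) / (α y : ℝ))

/-- The partial exclusion generator `L` in environment `α`. -/
noncomputable def gen {V : Type*} [Fintype V] [DecidableEq V] (α : V → ℕ) (a : ℝ)
    (adj : V → V → Prop) [DecidableRel adj] (φ : Conf α → ℝ) (η : Conf α) : ℝ :=
  ∑ x : V, ∑ y : V,
    if adj x y then jumpRate α a η x y * (φ (move α η x y) - φ η) else 0

/-- The single-particle (Bouchaud trap model) generator `A`. -/
noncomputable def sgen {V : Type*} [Fintype V] (α : V → ℕ) (a : ℝ)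
    (adj : V → V → Prop) [DecidableRel adj] (g : V → ℝ) (x : V) : ℝ :=
  (α x : ℝ) ^ (a - 1) * ∑ y : V, if adj x y then (α y : ℝ) ^ a * (g y - g x) else 0

/-- The two-particle generator `A^{(2)}` of two interacting BTM(a) particles. -/
noncomputable def gen2 {V : Type*} [Fintype V] [DecidableEq V] (α : V → ℕ) (a : ℝ)
    (adj : V → V → Prop) [DecidableRel adj] (h : V → V → ℝ) (z w : V) : ℝ :=
  (α z : ℝ) ^ (a - 1) *
      (∑ u : V, if adj z u then
        (α u : ℝ) ^ a * (1 - (if u = w then 1 else 0) / (α u : ℝ)) * (h u w - h z w)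
      else 0)
    + (α w : ℝ) ^ (a - 1) *
      (∑ u : V, if adj w u then
        (α u : ℝ) ^ a * (1 - (if u = z then 1 else 0) / (α u : ℝ)) * (h z u - h z w)
      else 0)

/-!
Interpolate between the two sides along `F s = exp (s • A₂) (u s ⊗ u s) (x, y)` with
`u s = exp ((t - s) • A) f`. Its derivative is `exp (s • A₂)` applied to
`A₂ (u ⊗ u) - A u ⊗ u - u ⊗ A u`, which for the exclusion generator equals
`-1_{z ∼ w} α_z^{a-1} α_w^{a-1} (u z - u w)²`: the only difference from two independent
particles is the reduced rate of jumps onto the partner's site. This is nonpositive, and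
`exp (s • A₂)` is entrywise nonnegative because `A₂` has nonnegative off-diagonal entries, so
`F` decreases from `F 0` (the right side) to `F t` (the left side).
-/

open NormedSpace
open scoped Matrix

namespace Matrix

variable {ι : Type*} [Fintype ι] [DecidableEq ι]

section LinftyOp

attribute [local instance] Matrix.linftyOpNormedRing Matrix.linftyOpNormedAlgebra

theorem exp_apply_nonneg_of_nonneg {P : Matrix ι ι ℝ} (hP : ∀ i j, 0 ≤ P i j) (i j : ι) :
    0 ≤ exp P i j :=
  hasSum_le (fun n => mul_nonneg (by positivity) (pow_apply_nonneg hP n i j)) hasSum_zero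
    (Pi.hasSum.mp (Pi.hasSum.mp (exp_series_hasSum_exp' (𝕂 := ℝ) P) i) j)

theorem hasDerivAt_exp_smul_mulVec_apply (M : Matrix ι ι ℝ) {w : ℝ → ι → ℝ} {w' : ι → ℝ}
    {s : ℝ} (hw : ∀ j, HasDerivAt (fun s => w s j) (w' j) s) (i : ι) :
    HasDerivAt (fun s => (exp (s • M) *ᵥ w s) i) ((exp (s • M) *ᵥ (M *ᵥ w s + w')) i) s := by
  have hE : ∀ j, HasDerivAt (fun s => exp (s • M) i j) ((exp (s • M) * M) i j) s := fun j =>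
    (entryLinearMap ℝ ℝ i j).toContinuousLinearMap.hasFDerivAt.comp_hasDerivAt s
      (hasDerivAt_exp_smul_const M s)
  refine (HasDerivAt.fun_sum fun j (_ : j ∈ Finset.univ) => (hE j).mul (hw j)).congr_deriv ?_
  rw [mulVec_add, mulVec_mulVec]
  simp only [Pi.add_apply, mulVec, dotProduct, Finset.sum_add_distrib]

end LinftyOp

theorem exp_add_smul_one (M : Matrix ι ι ℝ) (c : ℝ) : exp (M + c • 1) = exp c • exp M := by
  rw [exp_add_of_commute _ _ ((Commute.one_right M).smul_right c), smul_one_eq_diagonal,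
    exp_diagonal, Pi.exp_def]
  ext i j
  simp [mul_apply, diagonal_apply, mul_comm]

-- `M + c • 1` is entrywise nonnegative for `c = ∑ k, |M k k|`.
theorem exp_apply_nonneg_of_offDiag_nonneg {M : Matrix ι ι ℝ} (hM : ∀ i j, i ≠ j → 0 ≤ M i j)
    (i j : ι) : 0 ≤ exp M i j := by
  set c : ℝ := ∑ k, |M k k|
  have hN : ∀ i j, 0 ≤ (M + c • 1) i j := by
    intro i j
    rcases eq_or_ne i j with rfl | hij
    · have hdiag : |M i i| ≤ c :=
        Finset.single_le_sum (fun k _ => abs_nonneg (M k k)) (Finset.mem_univ i)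
      simp only [add_apply, smul_apply, one_apply_eq, smul_eq_mul, mul_one]
      linarith [neg_abs_le (M i i)]
    · simpa [one_apply_ne hij] using hM i j hij
  have hexpN := exp_apply_nonneg_of_nonneg hN i j
  rw [exp_add_smul_one, smul_apply, smul_eq_mul] at hexpN
  exact nonneg_of_mul_nonneg_right hexpN (Real.exp_eq_exp_ℝ ▸ Real.exp_pos c)

theorem exp_smul_mulVec_mul_le (M : Matrix ι ι ℝ) (M₂ : Matrix (ι × ι) (ι × ι) ℝ)
    (hM₂ : ∀ p q, p ≠ q → 0 ≤ M₂ p q)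
    (hM₂M : ∀ (g : ι → ℝ) (p : ι × ι),
      (M₂ *ᵥ fun q => g q.1 * g q.2) p ≤ (M *ᵥ g) p.1 * g p.2 + g p.1 * (M *ᵥ g) p.2)
    {t : ℝ} (ht : 0 ≤ t) (f : ι → ℝ) (p : ι × ι) :
    (exp (t • M₂) *ᵥ fun q => f q.1 * f q.2) p ≤
      (exp (t • M) *ᵥ f) p.1 * (exp (t • M) *ᵥ f) p.2 := by
  set u : ℝ → ι → ℝ := fun s => exp ((t - s) • M) *ᵥ f
  have hu : ∀ s i, HasDerivAt (fun s => u s i) (-(M *ᵥ u s) i) s := by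
    intro s i
    have h := (hasDerivAt_exp_smul_mulVec_apply M (w := fun _ => f) (w' := 0)
      (fun _ => hasDerivAt_const _ _) i).comp s ((hasDerivAt_id s).const_sub t)
    have hcomm : exp ((t - s) • M) * M = M * exp ((t - s) • M) :=
      ((Commute.refl M).smul_right (t - s)).exp_right.eq.symm
    refine h.congr_deriv ?_
    rw [id, add_zero, mulVec_mulVec, hcomm, ← mulVec_mulVec, mul_neg_one]
  set F : ℝ → ℝ := fun s => (exp (s • M₂) *ᵥ fun q => u s q.1 * u s q.2) p
  have hF : ∀ s, HasDerivAt F ((exp (s • M₂) *ᵥ ((M₂ *ᵥ fun q => u s q.1 * u s q.2) -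
      fun q => (M *ᵥ u s) q.1 * u s q.2 + u s q.1 * (M *ᵥ u s) q.2)) p) s := by
    intro s
    refine (hasDerivAt_exp_smul_mulVec_apply M₂
      (fun q => (hu s q.1).mul (hu s q.2)) p).congr_deriv ?_
    congr 2
    ext q
    ring
  have hF_nonpos : ∀ s, 0 ≤ s → deriv F s ≤ 0 := by
    intro s hs
    rw [(hF s).deriv]
    refine Finset.sum_nonpos fun q _ => mul_nonpos_of_nonneg_of_nonpos ?_ ?_
    · exact exp_apply_nonneg_of_offDiag_nonneg (fun p q hpq => mul_nonneg hs (hM₂ p q hpq)) p q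
    · exact sub_nonpos.mpr (hM₂M (u s) q)
  have hanti : AntitoneOn F (Set.Icc 0 t) :=
    antitoneOn_of_deriv_nonpos (convex_Icc 0 t)
      (fun s _ => (hF s).continuousAt.continuousWithinAt)
      (fun s _ => (hF s).differentiableAt.differentiableWithinAt)
      (fun s hs => hF_nonpos s (interior_subset hs).1)
  simpa [F, u] using hanti (Set.left_mem_Icc.2 ht) (Set.right_mem_Icc.2 ht) ht

end Matrix

section TwoParticle

variable {V : Type*} [Fintype V] [DecidableEq V] {adj : V → V → Prop} [DecidableRel adj]
  {α : V → ℕ} {a : ℝ}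

theorem sum_adj_exclusion_eq (φ : V → ℝ) (z w : V) (hw : α w ≠ 0) :
    (∑ u : V, if adj z u then (α u : ℝ) ^ a * (1 - (if u = w then 1 else 0) / (α u : ℝ)) * φ u
      else 0)
      = (∑ u : V, if adj z u then (α u : ℝ) ^ a * φ u else 0)
        - if adj z w then (α w : ℝ) ^ (a - 1) * φ w else 0 := by
  have hterm : ∀ u,
      (if adj z u then (α u : ℝ) ^ a * (1 - (if u = w then 1 else 0) / (α u : ℝ)) * φ u else 0)
        = (if adj z u then (α u : ℝ) ^ a * φ u else 0)
          - if u = w then (if adj z w then (α w : ℝ) ^ (a - 1) * φ w else 0) else 0 := by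
    intro u
    rcases eq_or_ne u w with rfl | huw
    · split_ifs
      · rw [Real.rpow_sub_one (Nat.cast_ne_zero.mpr hw)]
        ring
      all_goals simp
    · simp [huw]
  simp only [hterm, Finset.sum_sub_distrib, Finset.sum_ite_eq', Finset.mem_univ, if_true]

theorem gen2_mul_eq (hsym : ∀ x y, adj x y → adj y x) (g : V → ℝ) {z w : V} (hz : α z ≠ 0)
    (hw : α w ≠ 0) :
    gen2 α a adj (fun z w => g z * g w) z w
      = sgen α a adj g z * g w + g z * sgen α a adj g w
        - if adj z w then (α z : ℝ) ^ (a - 1) * (α w : ℝ) ^ (a - 1) * (g z - g w) ^ 2 else 0 := by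
  unfold gen2 sgen
  simp only [← sub_mul, ← mul_sub]
  rw [sum_adj_exclusion_eq (fun u => (g u - g z) * g w) z w hw,
    sum_adj_exclusion_eq (fun u => g z * (g u - g w)) w z hz]
  have hz' : (∑ u, if adj z u then (α u : ℝ) ^ a * ((g u - g z) * g w) else 0)
      = (∑ u, if adj z u then (α u : ℝ) ^ a * (g u - g z) else 0) * g w := by
    rw [Finset.sum_mul]
    exact Finset.sum_congr rfl fun u _ => by split_ifs <;> ring
  have hw' : (∑ u, if adj w u then (α u : ℝ) ^ a * (g z * (g u - g w)) else 0)
      = g z * ∑ u, if adj w u then (α u : ℝ) ^ a * (g u - g w) else 0 := by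
    rw [Finset.mul_sum]
    exact Finset.sum_congr rfl fun u _ => by split_ifs <;> ring
  rw [hz', hw']
  by_cases hzw : adj z w
  · simp only [hzw, hsym z w hzw, if_true]
    ring
  · simp only [hzw, mt (hsym w z) hzw, if_false]
    ring

theorem gen2_mul_le (hsym : ∀ x y, adj x y → adj y x) (g : V → ℝ) {z w : V} (hz : α z ≠ 0)
    (hw : α w ≠ 0) :
    gen2 α a adj (fun z w => g z * g w) z w ≤ sgen α a adj g z * g w + g z * sgen α a adj g w := by
  rw [gen2_mul_eq hsym g hz hw]
  exact sub_le_self _ (by split_ifs <;> positivity)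

theorem gen2_nonneg_of_nonneg_of_apply_eq_zero (h : V → V → ℝ) (hh : ∀ u v, 0 ≤ h u v) {z w : V}
    (hzw : h z w = 0) : 0 ≤ gen2 α a adj h z w := by
  have hcoef : ∀ u v : V, (0 : ℝ) ≤ 1 - (if u = v then 1 else 0) / (α u : ℝ) := by
    intro u v
    split_ifs
    · simpa [one_div] using Nat.cast_inv_le_one (α u)
    · simp
  unfold gen2
  rw [hzw]
  refine add_nonneg (mul_nonneg (by positivity) (Finset.sum_nonneg fun u _ => ?_))
    (mul_nonneg (by positivity) (Finset.sum_nonneg fun u _ => ?_)) <;> refine ite_nonneg ?_ le_rfl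
  · exact mul_nonneg (mul_nonneg (by positivity) (hcoef u w)) (by simpa using hh u w)
  · exact mul_nonneg (mul_nonneg (by positivity) (hcoef u z)) (by simpa using hh z u)

end TwoParticle

theorem negative_dependence_general {V : Type*} [Fintype V] [DecidableEq V]
    (adj : V → V → Prop) [DecidableRel adj]
    (hsym : ∀ x y, adj x y → adj y x)
    (a : ℝ)
    (α : V → ℕ) (hα : ∀ x, 1 ≤ α x)
    (MA : Matrix V V ℝ)
    (hMA : ∀ (g : V → ℝ) (x : V), ∑ y : V, MA x y * g y = sgen α a adj g x)
    (MA2 : Matrix (V × V) (V × V) ℝ)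
    (hMA2 : ∀ (h : V × V → ℝ) (p : V × V),
      ∑ q : V × V, MA2 p q * h q = gen2 α a adj (fun z w => h (z, w)) p.1 p.2)
    (t : ℝ) (ht : 0 ≤ t) (f : V → ℝ) (x y : V) :
    ∑ q : V × V, NormedSpace.exp (t • MA2) (x, y) q * (f q.1 * f q.2)
      ≤ (∑ u : V, NormedSpace.exp (t • MA) x u * f u) *
        (∑ u : V, NormedSpace.exp (t • MA) y u * f u) := by
  have hα0 : ∀ x, α x ≠ 0 := fun x => Nat.one_le_iff_ne_zero.mp (hα x)
  have hMA_mulVec : ∀ g, MA *ᵥ g = sgen α a adj g := fun g => funext (hMA g)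
  refine Matrix.exp_smul_mulVec_mul_le MA MA2 (fun p q hpq => ?_) (fun g p => ?_) ht f (x, y)
  · have hentry :
        MA2 p q = gen2 α a adj (fun z w => (Pi.single q 1 : V × V → ℝ) (z, w)) p.1 p.2 := by
      rw [← hMA2]
      exact (congrFun (Matrix.mulVec_single_one MA2 q) p).symm
    rw [hentry]
    exact gen2_nonneg_of_nonneg_of_apply_eq_zero _
      (fun u v => by simp only [Pi.single_apply]; positivity) (Pi.single_eq_of_ne hpq 1)
  · rw [hMA_mulVec]
    exact (hMA2 _ p).trans_le (gen2_mul_le hsym g (hα0 _) (hα0 _))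

/-- negative dependence of two interacting partial exclusion
particles at the level of semigroups.  `MA` is the single-particle generator
`A` viewed as a matrix indexed by `V`, and `MA2` is the two-particle
generator `A^{(2)}` viewed as a matrix indexed by `V × V`. -/
theorem negative_dependence {V : Type*} [Fintype V] [DecidableEq V]
    (adj : V → V → Prop) [DecidableRel adj]
    (hsym : ∀ x y, adj x y → adj y x) (hirr : ∀ x, ¬ adj x x)
    (a : ℝ) (ha0 : 0 ≤ a) (ha1 : a ≤ 1)
    (α : V → ℕ) (hα : ∀ x, 1 ≤ α x)
    (MA : Matrix V V ℝ)
    (hMA : ∀ (g : V → ℝ) (x : V), ∑ y : V, MA x y * g y = sgen α a adj g x)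
    (MA2 : Matrix (V × V) (V × V) ℝ)
    (hMA2 : ∀ (h : V × V → ℝ) (p : V × V),
      ∑ q : V × V, MA2 p q * h q = gen2 α a adj (fun z w => h (z, w)) p.1 p.2)
    (t : ℝ) (ht : 0 ≤ t) (f : V → ℝ) (x y : V) :
    ∑ q : V × V, NormedSpace.exp (t • MA2) (x, y) q * (f q.1 * f q.2)
      ≤ (∑ u : V, NormedSpace.exp (t • MA) x u * f u) *
        (∑ u : V, NormedSpace.exp (t • MA) y u * f u) :=
  negative_dependence_general adj hsym a α hα MA hMA MA2 hMA2 t ht f x y
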